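/- For all integers n ≥ 0 and k ≥ 1, the total number of k-down steps, summed over all Dyck paths from (0,0) to (2n,0), multiplied by 2n+1, equals (2k+1)·C(2n+1, n+k+1); equivalently, this total equals ((2k+1)/(2n+1))·C(2n+1, n+k+1). -/

import Mathlib

open Finset

attribute [local instance] Classical.propDecidable

/-- The height of the lattice path `p` (where `true` is a northeast step `(1,1)` and
`false` is a southeast step `(1,-1)`) after its first `i` steps. -/
def pathHeight {n : ℕ} (p : Fin n → Bool) (i : ℕ) : ℤ :=
  ∑ j ∈ Finset.univ.filter (fun j : Fin n => (j : ℕ) < i), (if p j then (1 : ℤ) else -1)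

/-- `p` is a generalized Dyck path from `(0,0)` to `(n,h)`: it ends at height `h`
and never goes below the x-axis. -/
def IsGDPath {n : ℕ} (h : ℤ) (p : Fin n → Bool) : Prop :=
  pathHeight p n = h ∧ ∀ i ≤ n, 0 ≤ pathHeight p i

/-- The set of generalized Dyck paths from `(0,0)` to `(n,h)`. -/
noncomputable def gdPaths (n : ℕ) (h : ℤ) : Finset (Fin n → Bool) :=
  Finset.univ.filter (IsGDPath h)

/-- The number of `k`-down steps of `p`, i.e. southeast steps from height `k` to `k-1`. -/
noncomputable def downSteps {n : ℕ} (k : ℤ) (p : Fin n → Bool) : ℕ :=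
  (Finset.univ.filter (fun i : Fin n => p i = false ∧ pathHeight p (i : ℕ) = k)).card

/-- Binomial coefficient on integers, `0` unless `0 ≤ b ≤ a`. -/
def binom (a b : ℤ) : ℤ :=
  if 0 ≤ b ∧ b ≤ a then (a.toNat.choose b.toNat : ℤ) else 0

/-!
Let `T n h` be the total number of `k`-down steps over the generalized Dyck paths from `(0,0)` to
`(n,h)`. Removing the last step gives `T (n+1) h = T n (h-1) + T n (h+1)` for `h ≥ 0`, plus, when
`h = k-1`, one more `k`-down step for each path to `(n,k)`; by the reflection principle there are
`walkCount n k - walkCount n (k+2)` of those, `walkCount n d` being the number of unrestricted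
`±1` walks of length `n` ending at `d`. Together with `T n (-1) = 0` this recursion is solved by
`T n h = walkCount n (max (2k-h) (h+2)) - walkCount n (2k+h+2)`. For Dyck paths (`h = 0`, `k ≥ 1`)
this is `C(2n, n+k) - C(2n, n+k+1)`, and `(2n+1)` times it is `(2k+1) C(2n+1, n+k+1)`.
-/

section Paths

variable {n : ℕ}

theorem pathHeight_zero (p : Fin n → Bool) : pathHeight p 0 = 0 := by
  simp [pathHeight]

theorem pathHeight_of_le (p : Fin n → Bool) {i : ℕ} (hi : n ≤ i) :
    pathHeight p i = pathHeight p n := by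
  simp only [pathHeight]
  congr 1
  ext j
  simp only [mem_filter, mem_univ, true_and]
  omega

theorem pathHeight_snoc (q : Fin n → Bool) (b : Bool) (i : ℕ) :
    pathHeight (Fin.snoc q b : Fin (n + 1) → Bool) i =
      pathHeight q i + if n < i then (if b then 1 else -1) else 0 := by
  simp [pathHeight, sum_filter, Fin.sum_univ_castSucc]

theorem isGDPath_snoc_iff {h : ℤ} (hh : 0 ≤ h) (q : Fin n → Bool) (b : Bool) :
    IsGDPath h (Fin.snoc q b : Fin (n + 1) → Bool) ↔ IsGDPath (h - if b then 1 else -1) q := by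
  simp only [IsGDPath, pathHeight_snoc, pathHeight_of_le q (Nat.le_succ n), Nat.lt_add_one,
    if_true]
  constructor
  · rintro ⟨hend, hnonneg⟩
    refine ⟨eq_sub_of_add_eq hend, fun i hi => ?_⟩
    simpa [Nat.not_lt.mpr hi] using hnonneg i (by omega)
  · rintro ⟨hend, hnonneg⟩
    refine ⟨by rw [hend, sub_add_cancel], fun i hi => ?_⟩
    rcases Nat.lt_or_ge n i with hni | hin
    · obtain rfl : i = n + 1 := by omega
      simp [pathHeight_of_le q (Nat.le_succ n), hend, hh]
    · simpa [Nat.not_lt.mpr hin] using hnonneg i hin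

theorem gdPaths_eq_empty_of_neg {h : ℤ} (hh : h < 0) : gdPaths n h = ∅ := by
  ext p
  simp only [gdPaths, mem_filter, mem_univ, true_and, IsGDPath, notMem_empty, iff_false]
  rintro ⟨hend, hnonneg⟩
  linarith [hnonneg n le_rfl]

theorem card_gdPaths_zero (h : ℤ) : (gdPaths 0 h).card = if h = 0 then 1 else 0 := by
  by_cases h0 : h = 0 <;>
    simp [gdPaths, IsGDPath, pathHeight_zero, filter_singleton, h0, eq_comm (a := (0 : ℤ))]

theorem sum_gdPaths_succ {M : Type*} [AddCommMonoid M] {h : ℤ} (hh : 0 ≤ h)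
    (F : (Fin (n + 1) → Bool) → M) :
    ∑ p ∈ gdPaths (n + 1) h, F p =
      ∑ q ∈ gdPaths n (h - 1), F (Fin.snoc q true) +
        ∑ q ∈ gdPaths n (h + 1), F (Fin.snoc q false) := by
  simp only [gdPaths, sum_filter]
  rw [← (Fin.snocEquiv fun _ => Bool).sum_comp, Fintype.sum_prod_type, Fintype.sum_bool]
  simp only [Fin.snocEquiv, Equiv.coe_fn_mk, isGDPath_snoc_iff hh]
  norm_num

theorem card_gdPaths_succ {h : ℤ} (hh : 0 ≤ h) :
    (gdPaths (n + 1) h).card = (gdPaths n (h - 1)).card + (gdPaths n (h + 1)).card := by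
  simpa only [card_eq_sum_ones] using sum_gdPaths_succ hh fun _ => 1

theorem downSteps_snoc (k : ℤ) (q : Fin n → Bool) (b : Bool) :
    downSteps k (Fin.snoc q b : Fin (n + 1) → Bool) =
      downSteps k q + if b = false ∧ pathHeight q n = k then 1 else 0 := by
  have hlt (i : Fin n) : ¬n < i := not_lt.mpr i.isLt.le
  simp only [downSteps, card_filter, Fin.sum_univ_castSucc, Fin.snoc_castSucc, Fin.snoc_last,
    Fin.val_castSucc, Fin.val_last, pathHeight_snoc, hlt, lt_irrefl, if_false, add_zero]

theorem sum_downSteps_gdPaths_succ (k : ℤ) {h : ℤ} (hh : 0 ≤ h) :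
    ∑ p ∈ gdPaths (n + 1) h, downSteps k p =
      ∑ q ∈ gdPaths n (h - 1), downSteps k q + ∑ q ∈ gdPaths n (h + 1), downSteps k q +
        if h + 1 = k then (gdPaths n (h + 1)).card else 0 := by
  have hend : ∀ q ∈ gdPaths n (h + 1), pathHeight q n = h + 1 := fun q hq =>
    (mem_filter.mp hq).2.1
  simp only [sum_gdPaths_succ hh, downSteps_snoc, Bool.true_eq_false, false_and, if_false,
    add_zero, true_and, sum_add_distrib, add_assoc]
  congr 2
  split_ifs with hk
  · rw [card_eq_sum_ones]
    exact sum_congr rfl fun q hq => by simp [hend q hq, hk]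
  · exact sum_eq_zero fun q hq => by simp [hend q hq, hk]

end Paths

def walkCount : ℕ → ℤ → ℕ
  | 0, d => if d = 0 then 1 else 0
  | n + 1, d => walkCount n (d - 1) + walkCount n (d + 1)

theorem walkCount_neg (n : ℕ) (d : ℤ) : walkCount n (-d) = walkCount n d := by
  induction n generalizing d with
  | zero => simp [walkCount]
  | succ n ih =>
    rw [walkCount, walkCount, show -d - 1 = -(d + 1) by ring, show -d + 1 = -(d - 1) by ring,
      ih, ih, add_comm]

theorem walkCount_eq_zero_of_lt {n : ℕ} {d : ℤ} (hd : n < d) : walkCount n d = 0 := by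
  induction n generalizing d with
  | zero => simp [walkCount, show d ≠ 0 by omega]
  | succ n ih => rw [walkCount, ih (d := d - 1) (by omega), ih (d := d + 1) (by omega)]

theorem walkCount_two_mul_sub (n i : ℕ) : walkCount n (2 * i - n) = n.choose i := by
  induction n generalizing i with
  | zero =>
    rcases i with _ | i
    · simp [walkCount]
    · rw [walkCount_eq_zero_of_lt (by push_cast; omega), Nat.choose_zero_succ]
  | succ n ih =>
    rcases i with _ | i
    · rw [walkCount, ← walkCount_neg, walkCount_eq_zero_of_lt (by push_cast; omega)]
      simpa using ih 0
    · rw [walkCount, Nat.choose_succ_succ, ← ih i, ← ih (i + 1)]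
      push_cast
      ring_nf

theorem walkCount_two_mul_two_mul (n j : ℕ) :
    walkCount (2 * n) (2 * j) = (2 * n).choose (n + j) := by
  rw [← walkCount_two_mul_sub]
  push_cast
  ring_nf

theorem card_gdPaths (n : ℕ) {h : ℤ} (hh : -1 ≤ h) :
    ((gdPaths n h).card : ℤ) = walkCount n h - walkCount n (h + 2) := by
  induction n generalizing h with
  | zero =>
    rw [card_gdPaths_zero, walkCount_eq_zero_of_lt (d := h + 2) (by omega)]
    simp [walkCount]
  | succ n ih =>
    rcases hh.eq_or_lt with rfl | hh
    · rw [gdPaths_eq_empty_of_neg (by norm_num), show (-1 : ℤ) + 2 = 1 by norm_num,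
        ← walkCount_neg _ 1, card_empty, Nat.cast_zero, sub_self]
    · rw [card_gdPaths_succ (by omega)]
      push_cast
      rw [ih (by omega), ih (by omega), walkCount, walkCount]
      push_cast
      ring_nf

theorem sum_downSteps_gdPaths (k n : ℕ) {h : ℤ} (hh : -1 ≤ h) :
    ((∑ p ∈ gdPaths n h, downSteps (k : ℤ) p : ℕ) : ℤ) =
      walkCount n (max (2 * k - h) (h + 2)) - walkCount n (2 * k + h + 2) := by
  induction n generalizing h with
  | zero =>
    rw [walkCount_eq_zero_of_lt (by omega), walkCount_eq_zero_of_lt (by omega)]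
    simp [downSteps]
  | succ n ih =>
    rcases hh.eq_or_lt with rfl | hh
    · rw [gdPaths_eq_empty_of_neg (by norm_num), sum_empty, Nat.cast_zero, max_eq_left (by omega),
        show 2 * (k : ℤ) + -1 + 2 = 2 * k - -1 by ring, sub_self]
    rw [sum_downSteps_gdPaths_succ _ (by omega), Nat.cast_add, Nat.cast_add, ih (by omega),
      ih (by omega), walkCount, walkCount, Nat.cast_ite, Nat.cast_zero]
    push_cast
    rcases lt_trichotomy (h + 1) k with hlt | heq | hgt
    · rw [if_neg hlt.ne, max_eq_left (by omega), max_eq_left (by omega), max_eq_left (by omega)]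
      ring_nf
    · rw [if_pos heq, card_gdPaths n (by omega), ← heq, max_eq_left (by omega),
        max_eq_right (by omega), max_eq_right (by omega)]
      ring_nf
    · rw [if_neg hgt.ne', max_eq_right (by omega), max_eq_right (by omega),
        max_eq_right (by omega)]
      ring_nf

theorem two_mul_add_one_mul_choose_sub_choose (n k : ℕ) :
    (2 * n + 1) * (((2 * n).choose (n + k) : ℤ) - (2 * n).choose (n + k + 1)) =
      (2 * k + 1) * (2 * n + 1).choose (n + k + 1) := by
  rcases le_or_gt k n with hkn | hnk
  · have hlow := Nat.add_one_mul_choose_eq (2 * n) (n + k)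
    have hhigh := Nat.choose_mul_succ_eq (2 * n) (n + k + 1)
    rw [show 2 * n + 1 - (n + k + 1) = n - k by omega] at hhigh
    zify [hkn] at hlow hhigh
    linear_combination hlow - hhigh
  · simp [Nat.choose_eq_zero_of_lt (by omega : 2 * n < n + k),
      Nat.choose_eq_zero_of_lt (by omega : 2 * n < n + k + 1),
      Nat.choose_eq_zero_of_lt (by omega : 2 * n + 1 < n + k + 1)]

/-- (2n+1) times the total number of k-down steps over all Dyck paths from (0,0) to (2n,0)
equals (2k+1)·C(2n+1, n+k+1). -/
theorem stmt3 (n k : ℕ) (hk : 1 ≤ k) :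
    (2 * n + 1) * (∑ p ∈ gdPaths (2 * n) 0, downSteps (k : ℤ) p) =
      (2 * k + 1) * Nat.choose (2 * n + 1) (n + k + 1) := by
  have hsum := sum_downSteps_gdPaths k (2 * n) (h := 0) (by norm_num)
  rw [max_eq_left (by omega), sub_zero, add_zero,
    show 2 * (k : ℤ) + 2 = 2 * (k + 1 : ℕ) by push_cast; ring,
    walkCount_two_mul_two_mul, walkCount_two_mul_two_mul, ← add_assoc] at hsum
  have := two_mul_add_one_mul_choose_sub_choose n k
  rw [← hsum] at this
  exact_mod_cast this
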